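/- arXiv:1301.0874 — 6 statements merged into one kernel-verified Lean document; each statement's English description precedes it below -/
import Mathlib

section
/- For all positive integers n and nonnegative integers j, we have n(n+j)^{n-1} = \sum_{i=1}^n \binom{n}{i} i^{i-1} (n+j-i)^{n-i}. -/
open Polynomial Finset

/-- The forward difference of a polynomial evaluation is evaluation of a polynomial
of smaller degree. -/
private lemma fwdDiff_eval_eq (p : ℚ[X]) :
    fwdDiff (1:ℚ) (fun x => p.eval x) = fun x => (p.comp (X + C 1) - p).eval x := by
  funext x
  simp [fwdDiff, eval_comp]

private lemma degree_comp_sub_lt (p : ℚ[X]) (hp : 0 < p.natDegree) :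
    (p.comp (X + C 1) - p).degree < p.degree := by
  have hp0 : p ≠ 0 := fun h => by simp [h] at hp
  have hq : (X + C (1:ℚ)).natDegree ≠ 0 := by
    rw [natDegree_X_add_C]; exact one_ne_zero
  have hlc : (p.comp (X + C 1)).leadingCoeff = p.leadingCoeff := by
    rw [leadingCoeff_comp hq, leadingCoeff_X_add_C, one_pow, mul_one]
  have hcomp0 : p.comp (X + C (1:ℚ)) ≠ 0 := by
    intro h
    apply hp0
    rw [← leadingCoeff_eq_zero, ← hlc, h, leadingCoeff_zero]
  have hnd : (p.comp (X + C (1:ℚ))).natDegree = p.natDegree := by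
    rw [natDegree_comp, natDegree_X_add_C, mul_one]
  have hdeg : (p.comp (X + C (1:ℚ))).degree = p.degree := by
    rw [degree_eq_natDegree hcomp0, degree_eq_natDegree hp0, hnd]
  exact hdeg ▸ degree_sub_lt hdeg hcomp0 hlc

/-- Iterated forward difference kills polynomials of low degree. -/
private lemma fwdDiff_iter_eval_eq_zero :
    ∀ (m : ℕ) (p : ℚ[X]), p.degree < (m : ℕ) → ∀ y : ℚ,
      (fwdDiff (1:ℚ))^[m] (fun x => p.eval x) y = 0 := by
  intro m
  induction m with
  | zero =>
    intro p hp y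
    have : p = 0 := by
      by_contra h
      rw [degree_eq_natDegree h] at hp
      exact absurd (WithBot.coe_lt_coe.mp hp) (Nat.not_lt_zero _)
    simp [this]
  | succ m ih =>
    intro p hp y
    rw [Function.iterate_succ_apply, fwdDiff_eval_eq]
    apply ih
    rcases Nat.eq_zero_or_pos p.natDegree with h0 | h0
    · have : p = C (p.coeff 0) := eq_C_of_natDegree_eq_zero h0
      rw [this]
      simp only [C_comp, sub_self, degree_zero]
      exact WithBot.bot_lt_coe m
    · have h1 := degree_comp_sub_lt p h0
      have h2 : p.degree ≤ (m : ℕ) := by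
        rw [degree_eq_natDegree (fun h => by simp [h] at h0)] at hp ⊢
        exact_mod_cast Nat.lt_succ_iff.mp (by exact_mod_cast hp)
      exact lt_of_lt_of_le h1 h2

/-- Alternating binomial sum of a low-degree power vanishes. -/
private lemma altsum (m n : ℕ) (hnm : n < m) :
    ∑ k ∈ range (m + 1), (-1:ℚ) ^ (m - k) * (m.choose k) * (k:ℚ) ^ n = 0 := by
  have hdeg : (X ^ n : ℚ[X]).degree < (m : ℕ) := by
    rw [degree_X_pow]
    exact_mod_cast hnm
  have h0 := fwdDiff_iter_eval_eq_zero m (X ^ n) hdeg 0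
  rw [fwdDiff_iter_eq_sum_shift] at h0
  have : ∀ k ∈ range (m + 1),
      ((-1 : ℤ) ^ (m - k) * (m.choose k : ℤ)) • ((fun x => (X ^ n : ℚ[X]).eval x) (0 + k • (1:ℚ)))
        = (-1:ℚ) ^ (m - k) * (m.choose k) * (k:ℚ) ^ n := by
    intro k _
    simp only [eval_pow, eval_X, zero_add, nsmul_eq_mul, mul_one, zsmul_eq_mul]
    push_cast
    ring
  rw [Finset.sum_congr rfl this] at h0
  exact h0

private lemma eq_of_deriv_eq (p q : ℚ[X]) (h : derivative p = derivative q)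
    (a : ℚ) (h2 : p.eval a = q.eval a) : p = q := by
  have hd : derivative (p - q) = 0 := by rw [derivative_sub, h, sub_self]
  have hc := eq_C_of_derivative_eq_zero hd
  have h3 : (p - q).eval a = 0 := by simp [h2]
  rw [hc] at h3
  simp only [eval_C] at h3
  have : p - q = 0 := by rw [hc, h3, map_zero]
  exact sub_eq_zero.mp this

private noncomputable def S (n : ℕ) (c : ℚ) : ℚ[X] :=
  ∑ k ∈ range n, C (((n.choose (k+1)) * (k+1)^k : ℕ) : ℚ)
      * (X + C (c + ((n - (k+1) : ℕ) : ℚ))) ^ (n - (k+1))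

private lemma abel_poly : ∀ n : ℕ, 1 ≤ n → ∀ c : ℚ,
    ((n : ℕ) : ℚ[X]) * (X + C (c + n)) ^ (n-1) = S n c := by
  intro n hn
  induction n, hn using Nat.le_induction with
  | base => intro c; simp [S]
  | succ n hn ih =>
    intro c
    have hS : S (n+1) c = ∑ k ∈ range (n+1),
        C ((((n+1).choose (k+1)) * (k+1)^k : ℕ) : ℚ)
          * (X + C (c + ((n - k : ℕ) : ℚ))) ^ (n - k) := by
      rw [S]
      apply Finset.sum_congr rfl
      intro k _
      rw [Nat.succ_sub_succ]
    apply eq_of_deriv_eq _ _ ?hD (-(c + ((n:ℚ)+1))) ?hE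
    case hD =>
      have hL : derivative (((n+1 : ℕ) : ℚ[X]) * (X + C (c + ((n+1 : ℕ) : ℚ))) ^ ((n+1)-1))
          = ((n+1 : ℕ) : ℚ[X]) * (C ((n : ℕ) : ℚ) * (X + C (c + ((n+1 : ℕ) : ℚ))) ^ (n-1)) := by
        rw [derivative_mul, derivative_natCast, zero_mul, zero_add,
          Nat.add_sub_cancel, derivative_X_add_C_pow]
      rw [hL, hS, derivative_sum]
      have hterm : ∀ k ∈ range (n+1),
          derivative (C ((((n+1).choose (k+1)) * (k+1)^k : ℕ) : ℚ)
              * (X + C (c + ((n - k : ℕ) : ℚ))) ^ (n - k))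
          = C ((((n+1).choose (k+1)) * (k+1)^k : ℕ) : ℚ)
              * (C ((n - k : ℕ) : ℚ) * (X + C (c + ((n - k : ℕ) : ℚ))) ^ (n - k - 1)) := by
        intro k _
        rw [derivative_mul, derivative_C, zero_mul, zero_add, derivative_X_add_C_pow]
      rw [Finset.sum_congr rfl hterm, Finset.sum_range_succ]
      have hlast : C ((((n+1).choose (n+1)) * (n+1)^n : ℕ) : ℚ)
          * (C ((n - n : ℕ) : ℚ) * (X + C (c + ((n - n : ℕ) : ℚ))) ^ (n - n - 1)) = 0 := by
        simp
      rw [hlast, add_zero]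
      have key : ∀ k ∈ range n,
          C ((((n+1).choose (k+1)) * (k+1)^k : ℕ) : ℚ)
              * (C ((n - k : ℕ) : ℚ) * (X + C (c + ((n - k : ℕ) : ℚ))) ^ (n - k - 1))
          = ((n+1 : ℕ) : ℚ[X]) * (C (((n.choose (k+1)) * (k+1)^k : ℕ) : ℚ)
              * (X + C ((c+1) + ((n - (k+1) : ℕ) : ℚ))) ^ (n - (k+1))) := by
        intro k hk
        have hk' : k < n := Finset.mem_range.mp hk
        have h1 : n - k - 1 = n - (k+1) := by omega
        have h2 : ((n - k : ℕ) : ℚ) = ((n - (k+1) : ℕ) : ℚ) + 1 := by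
          have : (n - k : ℕ) = (n - (k+1)) + 1 := by omega
          rw [this]; push_cast; ring
        have h3 : ((n+1).choose (k+1)) * (k+1)^k * (n - k)
            = (n+1) * ((n.choose (k+1)) * (k+1)^k) := by
          have hc := Nat.choose_mul_succ_eq n (k+1)
          have h4 : n + 1 - (k+1) = n - k := by omega
          rw [h4] at hc
          calc ((n+1).choose (k+1)) * (k+1)^k * (n - k)
              = ((n+1).choose (k+1) * (n - k)) * (k+1)^k := by ring
            _ = (n.choose (k+1) * (n+1)) * (k+1)^k := by rw [← hc]
            _ = (n+1) * ((n.choose (k+1)) * (k+1)^k) := by ring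
        rw [h1, ← mul_assoc, ← C_mul]
        have h5 : (((n+1).choose (k+1) * (k+1)^k : ℕ) : ℚ) * ((n - k : ℕ) : ℚ)
            = ((n+1 : ℕ) : ℚ) * ((n.choose (k+1) * (k+1)^k : ℕ) : ℚ) := by
          rw [← Nat.cast_mul, ← Nat.cast_mul, h3]
        rw [h5]
        have h6 : c + ((n - k : ℕ) : ℚ) = (c + 1) + ((n - (k+1) : ℕ) : ℚ) := by
          rw [h2]; ring
        rw [h6, C_mul, mul_assoc]
        congr 1
      rw [Finset.sum_congr rfl key, ← Finset.mul_sum]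
      have hSn : ∑ k ∈ range n, C (((n.choose (k+1)) * (k+1)^k : ℕ) : ℚ)
          * (X + C ((c+1) + ((n - (k+1) : ℕ) : ℚ))) ^ (n - (k+1)) = S n (c+1) := rfl
      rw [hSn, ← ih (c+1)]
      have h7 : c + 1 + (n : ℚ) = c + ((n+1 : ℕ) : ℚ) := by push_cast; ring
      rw [h7]
      have h8 : ((n : ℕ) : ℚ[X]) = C ((n : ℕ) : ℚ) := by simp
      rw [h8]
    case hE =>
      have hLe : (((n+1 : ℕ) : ℚ[X]) * (X + C (c + ((n+1 : ℕ) : ℚ))) ^ ((n+1)-1)).eval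
          (-(c + ((n:ℚ)+1))) = 0 := by
        rw [Nat.add_sub_cancel]
        simp only [eval_mul, eval_pow, eval_add, eval_X, eval_C, eval_natCast]
        have : -(c + ((n:ℚ)+1)) + (c + ((n+1 : ℕ) : ℚ)) = 0 := by push_cast; ring
        rw [this, zero_pow (by omega), mul_zero]
      rw [hLe, hS, eval_finset_sum]
      have hterm : ∀ k ∈ range (n+1),
          (C ((((n+1).choose (k+1)) * (k+1)^k : ℕ) : ℚ)
            * (X + C (c + ((n - k : ℕ) : ℚ))) ^ (n - k)).eval (-(c + ((n:ℚ)+1)))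
          = (-1:ℚ) ^ (n - k) * ((n+1).choose (k+1)) * ((k+1 : ℕ) : ℚ) ^ n := by
        intro k hk
        have hk' : k < n + 1 := Finset.mem_range.mp hk
        simp only [eval_mul, eval_pow, eval_add, eval_X, eval_C]
        have hv : -(c + ((n:ℚ)+1)) + (c + ((n - k : ℕ) : ℚ)) = -(((k+1 : ℕ) : ℚ)) := by
          have : ((n - k : ℕ) : ℚ) = (n : ℚ) - (k : ℕ) := by
            rw [Nat.cast_sub (by omega)]
          rw [this]; push_cast; ring
        rw [hv, neg_pow]
        have hsplit : ((k:ℚ)+1) ^ n = ((k:ℚ)+1) ^ (n - k) * ((k:ℚ)+1) ^ k := by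
          rw [← pow_add]
          congr 1
          omega
        push_cast
        rw [hsplit]
        ring
      rw [Finset.sum_congr rfl hterm]
      have := altsum (n+1) n (by omega)
      rw [Finset.sum_range_succ'] at this
      have h0 : (-1:ℚ) ^ (n + 1 - 0) * ((n+1).choose 0) * ((0:ℕ):ℚ) ^ n = 0 := by
        simp [zero_pow (by omega : n ≠ 0)]
      rw [h0, add_zero] at this
      rw [← this]
      apply Finset.sum_congr rfl
      intro k _
      have : n + 1 - (k+1) = n - k := by omega
      rw [this]

theorem abel_identity (n j : ℕ) (hn : 1 ≤ n) :
    n * (n + j) ^ (n - 1) =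
      ∑ i ∈ Finset.Icc 1 n, n.choose i * i ^ (i - 1) * (n + j - i) ^ (n - i) := by
  have h := congrArg (Polynomial.eval (j:ℚ)) (abel_poly n hn 0)
  simp only [S, eval_mul, eval_pow, eval_add, eval_X, eval_C, eval_natCast,
    eval_finset_sum] at h
  rw [← Finset.Ico_add_one_right_eq_Icc, Finset.sum_Ico_eq_sum_range]
  apply Nat.cast_inj (R := ℚ) |>.mp
  rw [Nat.cast_sum]
  have hterm : ∀ i ∈ range (n + 1 - 1),
      ((n.choose (1+i) * (1+i) ^ ((1+i) - 1) * (n + j - (1+i)) ^ (n - (1+i)) : ℕ) : ℚ)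
      = ((n.choose (i+1) * (i+1) ^ i : ℕ) : ℚ)
          * ((j:ℚ) + (0 + ((n - (i+1) : ℕ) : ℚ))) ^ (n - (i+1)) := by
    intro i hi
    have hi' : i < n := by
      have := Finset.mem_range.mp hi
      omega
    have e1 : 1 + i = i + 1 := by omega
    have e2 : (i+1) - 1 = i := by omega
    have e3 : n + j - (i+1) = j + (n - (i+1)) := by omega
    rw [e1, e2, e3]
    push_cast
    ring
  rw [Finset.sum_congr rfl hterm, show n + 1 - 1 = n from rfl, ← h]
  push_cast
  ring
end

section
/- Define T : ℕ → ℕ by T(1)=1 and for n ≥ 2, T(n) = (1/(2(n-1))) \sum_{i=1}^{n-1} \binom{n}{i} i(n-i) T(i) T(n-i). Then T(n) = n^{n-2} for all n ≥ 1. -/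
/-!
The recursion determines `T` on `n ≥ 1`, because `2(n-1) ≠ 0` and its right side only involves
values below `n`; so it suffices that `n ^ (n - 2)` satisfies it, i.e. that
`∑ C(n,i) i^(i-1) (n-i)^(n-i-1) = 2(n-1) n^(n-2)`. Multiplying the summand by `i + (n - i) = n`
and the symmetry `i ↔ n - i`, this reduces to `∑_{k=1}^n C(n,k) k^(k-1) (n-k)^(n-k) = n^n`,
a case of Abel's identity `∑_j C(N,j) (j+1)^(j-1) (z-j-1)^(N-j) = z^N`. That identity follows by
expanding `(z - (j+1))^(N-j)` binomially: the coefficient of `z^(N-m)` is an `m`-th forward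
difference of `x ↦ x^(m-1)`, which vanishes unless `m = 0`.
-/

open Finset

section CommRing

variable {R : Type*} [CommRing R]

theorem sum_range_neg_one_pow_mul_choose_mul_add_pow (x : R) {d m : ℕ} (h : d < m) :
    ∑ j ∈ range (m + 1), (-1) ^ (m - j) * (m.choose j : R) * (x + j) ^ d = 0 := by
  have := congrFun (fwdDiff_iter_pow_eq_zero_of_lt (R := R) h) x
  rw [fwdDiff_iter_eq_sum_shift] at this
  simpa [zsmul_eq_mul] using this

theorem choose_mul_add_pow_eq_sum (a b : R) (N j : ℕ) :
    (N.choose j : R) * (a + b) ^ (N - j) =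
      ∑ m ∈ range (N + 1), (N.choose m : R) * m.choose j * a ^ (m - j) * b ^ (N - m) := by
  rcases le_or_gt j N with hj | hj
  · rw [← sum_range_add_sum_Ico _ (show j ≤ N + 1 by omega),
      sum_eq_zero fun m hm => by simp [Nat.choose_eq_zero_of_lt (mem_range.1 hm)],
      zero_add, sum_Ico_eq_sum_range, show N + 1 - j = N - j + 1 by omega, add_pow, mul_sum]
    refine sum_congr rfl fun i hi => ?_
    have hchoose := Nat.choose_mul (n := N) (k := j + i) (s := j) (by omega)
    rw [Nat.add_sub_cancel_left] at hchoose
    rw [Nat.add_sub_cancel_left, Nat.sub_sub, ← Nat.cast_mul (N.choose _), hchoose]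
    push_cast
    ring
  · rw [Nat.choose_eq_zero_of_lt hj, Nat.cast_zero, zero_mul, eq_comm]
    exact sum_eq_zero fun m hm => by
      simp [Nat.choose_eq_zero_of_lt (show m < j by simp at hm; omega)]

theorem choose_mul_add_one_pow_mul_neg_pow {m j : ℕ} (hj : j ≤ m) :
    (m.choose j : R) * ((j : R) + 1) ^ (j - 1) * (-((j : R) + 1)) ^ (m - j) =
      (-1) ^ (m - j) * m.choose j * (1 + j) ^ (m - 1) := by
  rcases j with _ | j
  · simp
  · rw [neg_pow, add_comm 1, mul_mul_mul_comm, ← pow_add,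
      show j + 1 - 1 + (m - (j + 1)) = m - 1 by omega]
    push_cast
    ring

theorem sum_range_choose_mul_add_one_pow_mul_neg_pow {m N : ℕ} (hm : 0 < m) (hmN : m ≤ N) :
    ∑ j ∈ range (N + 1), (m.choose j : R) * ((j : R) + 1) ^ (j - 1) * (-((j : R) + 1)) ^ (m - j)
      = 0 := by
  rw [← sum_range_add_sum_Ico _ (show m + 1 ≤ N + 1 by omega),
    sum_eq_zero (s := Ico _ _) fun j hj => by
      simp [Nat.choose_eq_zero_of_lt (show m < j by simp at hj; omega)],
    add_zero, ← sum_range_neg_one_pow_mul_choose_mul_add_pow (1 : R) (show m - 1 < m by omega)]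
  exact sum_congr rfl fun j hj =>
    choose_mul_add_one_pow_mul_neg_pow (Nat.lt_succ_iff.1 (mem_range.1 hj))

-- Abel's identity at `x = 1`; at `j = 0` the truncated exponent `j - 1 = 0` is harmless, the base
-- being `1`.
theorem sum_range_choose_mul_add_one_pow_mul_sub_pow (N : ℕ) (z : R) :
    ∑ j ∈ range (N + 1), (N.choose j : R) * ((j : R) + 1) ^ (j - 1) * (z - (j + 1)) ^ (N - j)
      = z ^ N := by
  calc _ = ∑ j ∈ range (N + 1), ∑ m ∈ range (N + 1), (N.choose m : R) * z ^ (N - m) *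
          ((m.choose j : R) * ((j : R) + 1) ^ (j - 1) * (-((j : R) + 1)) ^ (m - j)) := by
        refine sum_congr rfl fun j _ => ?_
        rw [sub_eq_neg_add, mul_right_comm, choose_mul_add_pow_eq_sum, sum_mul]
        exact sum_congr rfl fun m _ => by ring
    _ = ∑ m ∈ range (N + 1), (N.choose m : R) * z ^ (N - m) * ∑ j ∈ range (N + 1),
          (m.choose j : R) * ((j : R) + 1) ^ (j - 1) * (-((j : R) + 1)) ^ (m - j) := by
        rw [sum_comm]
        simp only [mul_sum]
    _ = z ^ N := by
        rw [sum_eq_single 0 (fun m hm hm0 => by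
            rw [sum_range_choose_mul_add_one_pow_mul_neg_pow (Nat.pos_of_ne_zero hm0)
              (Nat.lt_succ_iff.1 (mem_range.1 hm)), mul_zero])
          (by simp), sum_range_succ']
        simp

end CommRing

theorem add_one_mul_add_one_pow_sub_one {R : Type*} [Semiring R] (j : ℕ) :
    ((j : R) + 1) * ((j : R) + 1) ^ (j - 1) = ((j : R) + 1) ^ j := by
  rcases j with _ | j
  · simp
  · rw [Nat.add_sub_cancel, pow_succ']

theorem sum_Icc_choose_mul_pow_mul_sub_pow {n : ℕ} (hn : 0 < n) :
    ∑ k ∈ Icc 1 n, n.choose k * k ^ (k - 1) * (n - k) ^ (n - k) = n ^ n := by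
  obtain ⟨N, rfl⟩ := Nat.exists_eq_add_of_lt hn
  rw [zero_add, ← Ico_add_one_right_eq_Icc, sum_Ico_eq_sum_range, Nat.add_sub_cancel]
  simp only [add_comm 1, Nat.add_sub_cancel, Nat.add_sub_add_right]
  have hterm : ∀ j ∈ range (N + 1),
      (((N + 1).choose (j + 1) * (j + 1) ^ j * (N - j) ^ (N - j) : ℕ) : ℤ) =
        N.choose j * ((j : ℤ) + 1) ^ (j - 1) * ((N + 1 : ℤ) - (j + 1)) ^ (N - j) * (N + 1) := by
    intro j hj
    have hchoose : ((N + 1 : ℕ) : ℤ) * N.choose j =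
        (N + 1).choose (j + 1) * ((j + 1 : ℕ) : ℤ) := mod_cast Nat.add_one_mul_choose_eq N j
    push_cast [Nat.cast_sub (Nat.lt_succ_iff.1 (mem_range.1 hj))] at hchoose ⊢
    rw [← add_one_mul_add_one_pow_sub_one j]
    linear_combination (-(j + 1 : ℤ) ^ (j - 1) * (N - j : ℤ) ^ (N - j)) * hchoose
  apply Nat.cast_injective (R := ℤ)
  rw [Nat.cast_sum, sum_congr rfl hterm, ← sum_mul,
    sum_range_choose_mul_add_one_pow_mul_sub_pow]
  push_cast
  ring

theorem sum_Icc_choose_mul_pow_mul_sub_pow_sub_one (n : ℕ) :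
    ∑ i ∈ Icc 1 (n - 1), n.choose i * i ^ (i - 1) * (n - i) ^ (n - i - 1) =
      2 * (n - 1) * n ^ (n - 2) := by
  rcases lt_or_ge n 2 with hn | hn
  · interval_cases n <;> rfl
  set u : ℕ → ℕ := fun i => n.choose i * i ^ (i - 1) * (n - i) ^ (n - i - 1)
  have hright : ∑ i ∈ Icc 1 (n - 1), u i * (n - i) + n ^ (n - 1) = n ^ n := by
    have hsplit := sum_Icc_succ_top (show 1 ≤ n - 1 + 1 by omega)
      fun k => n.choose k * k ^ (k - 1) * (n - k) ^ (n - k)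
    rw [Nat.sub_add_cancel (by omega)] at hsplit
    rw [← sum_Icc_choose_mul_pow_mul_sub_pow (show 0 < n by omega), hsplit]
    simp only [Nat.choose_self, Nat.sub_self, pow_zero, mul_one, one_mul]
    refine congrArg (· + _) (sum_congr rfl fun i hi => ?_)
    rw [mul_assoc, pow_sub_one_mul (by simp at hi; omega)]
  have hleft : ∑ i ∈ Icc 1 (n - 1), u i * i = ∑ i ∈ Icc 1 (n - 1), u i * (n - i) := by
    refine sum_nbij' (fun i => n - i) (fun i => n - i) ?_ ?_ ?_ ?_ ?_ <;>
      intro i hi <;> simp only [mem_Icc] at hi ⊢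
    any_goals omega
    simp only [u, Nat.choose_symm (show i ≤ n by omega), show n - (n - i) = i by omega]
    ring
  have hsum : n * ∑ i ∈ Icc 1 (n - 1), u i + 2 * n ^ (n - 1) = 2 * n ^ n := by
    have : ∀ i ∈ Icc 1 (n - 1), n * u i = u i * i + u i * (n - i) := fun i hi => by
      rw [← mul_add, mul_comm, Nat.add_sub_cancel' (by simp at hi; omega)]
    rw [mul_sum, sum_congr rfl this, sum_add_distrib, hleft, ← hright]
    ring
  obtain ⟨m, rfl⟩ := Nat.exists_eq_add_of_le' hn
  simp only [Nat.add_sub_cancel, Nat.add_succ_sub_one, pow_succ] at hsum ⊢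
  have hcancel : ∑ i ∈ Icc 1 (m + 1), u i + 2 * (m + 2) ^ m = 2 * (m + 2) * (m + 2) ^ m :=
    Nat.eq_of_mul_eq_mul_left (show 0 < m + 2 by omega) (by linarith)
  linarith

theorem mul_zpow_natCast_sub_two {G₀ : Type*} [GroupWithZero G₀] {a : G₀} (ha : a ≠ 0)
    {m : ℕ} (hm : 1 ≤ m) : a * a ^ ((m : ℤ) - 2) = a ^ (m - 1) := by
  rw [← zpow_one_add₀ ha, ← zpow_natCast, Nat.cast_sub hm]
  ring_nf

def dziobekSum (T : ℕ → ℚ) (n : ℕ) : ℚ :=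
  ∑ i ∈ Icc 1 (n - 1), (n.choose i : ℚ) * i * ((n - i : ℕ) : ℚ) * T i * T (n - i)

theorem dziobek_rec_unique {T T' : ℕ → ℚ} (h1 : T 1 = T' 1)
    (hT : ∀ n : ℕ, 2 ≤ n → 2 * ((n : ℚ) - 1) * T n = dziobekSum T n)
    (hT' : ∀ n : ℕ, 2 ≤ n → 2 * ((n : ℚ) - 1) * T' n = dziobekSum T' n) :
    ∀ n, 1 ≤ n → T n = T' n := by
  intro n
  induction n using Nat.strong_induction_on with
  | _ n ih =>
    intro hn
    obtain rfl | hn2 := eq_or_lt_of_le hn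
    · exact h1
    have hsum : dziobekSum T n = dziobekSum T' n :=
      sum_congr rfl fun i hi => by
        simp only [mem_Icc] at hi
        rw [ih i (by omega) hi.1, ih (n - i) (by omega) (by omega)]
    have hne : 2 * ((n : ℚ) - 1) ≠ 0 := by
      have : (2 : ℚ) ≤ n := by exact_mod_cast hn2
      exact ne_of_gt (by linarith)
    exact mul_left_cancel₀ hne ((hT n hn2).trans (hsum.trans (hT' n hn2).symm))

theorem pow_sub_two_satisfies_dziobek_rec (n : ℕ) (hn : 2 ≤ n) :
    2 * ((n : ℚ) - 1) * (n : ℚ) ^ ((n : ℤ) - 2) =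
      dziobekSum (fun n => (n : ℚ) ^ ((n : ℤ) - 2)) n := by
  have hterm : ∀ i ∈ Icc 1 (n - 1),
      (n.choose i : ℚ) * i * ((n - i : ℕ) : ℚ) * (i : ℚ) ^ ((i : ℤ) - 2) *
          ((n - i : ℕ) : ℚ) ^ (((n - i : ℕ) : ℤ) - 2) =
        ((n.choose i * i ^ (i - 1) * (n - i) ^ (n - i - 1) : ℕ) : ℚ) := by
    intro i hi
    simp only [mem_Icc] at hi
    have hi' := mul_zpow_natCast_sub_two (a := (i : ℚ)) (Nat.cast_ne_zero.2 (by omega)) hi.1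
    have hni := mul_zpow_natCast_sub_two (a := ((n - i : ℕ) : ℚ))
      (Nat.cast_ne_zero.2 (by omega)) (show 1 ≤ n - i by omega)
    push_cast
    rw [← hi', ← hni]
    ring
  rw [dziobekSum, sum_congr rfl hterm, ← Nat.cast_sum, sum_Icc_choose_mul_pow_mul_sub_pow_sub_one,
    show (n : ℤ) - 2 = ((n - 2 : ℕ) : ℤ) by omega, zpow_natCast]
  push_cast [Nat.cast_sub (show 1 ≤ n by omega)]
  ring

theorem dziobek_cayley (T : ℕ → ℚ) (h1 : T 1 = 1)
    (hrec : ∀ n : ℕ, 2 ≤ n →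
      2 * ((n : ℚ) - 1) * T n =
        ∑ i ∈ Finset.Icc 1 (n - 1),
          (n.choose i : ℚ) * i * ((n - i : ℕ) : ℚ) * T i * T (n - i)) :
    ∀ n : ℕ, 1 ≤ n → T n = (n : ℚ) ^ ((n : ℤ) - 2) :=
  dziobek_rec_unique (by rw [h1]; norm_num) hrec pow_sub_two_satisfies_dziobek_rec
end

section
/- Define J : ℕ × ℤ → ℚ by J(n,k)=0 if k<0 or n<1, J(1,0)=1, and for n ≥ 1, k ≥ 0 (with (n,k)≠(1,0)), J(n,k) = n² J(n,k-1) + (1/2) \sum_{i=1}^{n-1} \sum_{j=0}^{k} \binom{n+k-2}{i+j-1} i(n-i) J(i,j) J(n-i,k-j). Then J(n,0) = n^{n-3} for all n ≥ 1 (i.e., n³·J(n,0) = n^n). -/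
open Polynomial Finset

noncomputable def AbP : ℕ → Polynomial ℚ
  | 0 => 1
  | (n+1) => X * (X + (n : ℚ[X]) + 1) ^ n

lemma AbP_succ (n : ℕ) : AbP (n+1) = X * (X + (n : ℚ[X]) + 1) ^ n := rfl

lemma AbP_deriv (n : ℕ) :
    derivative (AbP (n+1)) = ((n : ℚ) + 1) • ((AbP n).comp (X + 1)) := by
  cases n with
  | zero => simp [AbP]
  | succ m =>
    rw [AbP_succ, AbP_succ]
    simp only [derivative_mul, derivative_X, derivative_pow, derivative_add, derivative_natCast,
      derivative_one, add_zero, mul_comp, X_comp, pow_comp, add_comp, natCast_comp, one_comp,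
      smul_eq_C_mul, C_add, C_1, C_eq_natCast]
    push_cast
    ring

lemma AbP_binom (n : ℕ) (y : ℚ) :
    ∑ k ∈ range (n+1), ((n.choose k : ℚ) * (AbP (n-k)).eval y) • AbP k
      = (AbP n).comp (X + C y) := by
  induction n generalizing y with
  | zero => simp [AbP]
  | succ n ih =>
    set F := (∑ k ∈ range (n+2), (((n+1).choose k : ℚ) * (AbP (n+1-k)).eval y) • AbP k)
      - (AbP (n+1)).comp (X + C y) with hF
    have hderiv : derivative F = 0 := by
      rw [hF, derivative_sub, derivative_sum]
      have h1 : ∀ k ∈ range (n+2), derivative ((((n+1).choose k : ℚ) * (AbP (n+1-k)).eval y) • AbP k)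
          = (((n+1).choose k : ℚ) * (AbP (n+1-k)).eval y) • derivative (AbP k) := by
        intro k _; rw [derivative_smul]
      rw [Finset.sum_congr rfl h1, Finset.sum_range_succ']
      have h2 : ∀ j, (((n+1).choose (j+1) : ℚ) * (AbP (n+1-(j+1))).eval y) • derivative (AbP (j+1))
          = ((n:ℚ)+1) • (((n.choose j : ℚ) * (AbP (n-j)).eval y) • ((AbP j).comp (X+1))) := by
        intro j
        have hnj : n + 1 - (j+1) = n - j := by omega
        rw [AbP_deriv, hnj, smul_smul, smul_smul]
        congr 1
        have hc : ((n+1).choose (j+1) : ℚ) * ((j:ℚ)+1) = ((n:ℚ)+1) * (n.choose j : ℚ) := by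
          exact_mod_cast congrArg (Nat.cast (R := ℚ)) (Nat.add_one_mul_choose_eq n j).symm
        linear_combination (AbP (n-j)).eval y * hc
      rw [Finset.sum_congr rfl (fun j _ => h2 j)]
      rw [← Finset.smul_sum]
      have h3 : ∑ j ∈ range (n+1), ((n.choose j : ℚ) * (AbP (n-j)).eval y) • ((AbP j).comp (X+1))
          = ((AbP n).comp (X + C y)).comp (X + 1) := by
        rw [← ih y, Polynomial.sum_comp]
        exact Finset.sum_congr rfl fun j _ => by rw [smul_comp]
      rw [h3]
      have h4 : derivative ((AbP (n+1)).comp (X + C y))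
          = ((n:ℚ)+1) • (((AbP n).comp (X + C y)).comp (X+1)) := by
        rw [derivative_comp, AbP_deriv, smul_comp, comp_assoc, comp_assoc]
        simp only [derivative_add, derivative_X, derivative_C, add_zero, add_comp, X_comp,
          C_comp, one_comp, one_mul]
        congr 2
        ring
      rw [h4]
      rw [show derivative (AbP 0) = 0 by simp [AbP]]
      simp
    have h0 : F.eval 0 = 0 := by
      rw [hF, eval_sub, eval_finset_sum, Finset.sum_range_succ']
      simp only [eval_smul, smul_eq_mul]
      have : ∀ j ∈ range (n+1), (((n+1).choose (j+1) : ℚ) * (AbP (n+1-(j+1))).eval y) * (AbP (j+1)).eval 0 = 0 := by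
        intro j _
        rw [show (AbP (j+1)).eval 0 = 0 by rw [AbP_succ]; simp, mul_zero]
      rw [Finset.sum_congr rfl this, Finset.sum_const_zero, zero_add, eval_comp]
      simp [AbP]
    have hFz : F = 0 := by
      have hc := Polynomial.eq_C_of_derivative_eq_zero hderiv
      rw [hc] at h0 ⊢
      simp only [eval_C] at h0
      rw [h0, map_zero]
    have := sub_eq_zero.mp hFz
    exact this

lemma AbP_eval_one (k : ℕ) : (AbP k).eval 1 = ((k+1 : ℕ) : ℚ) ^ (k-1) := by
  cases k with
  | zero => simp [AbP]
  | succ j =>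
    rw [AbP_succ]
    simp only [eval_mul, eval_pow, eval_add, eval_X, eval_natCast, eval_one, one_mul,
      Nat.add_sub_cancel]
    push_cast
    ring

lemma AbP_key (m : ℕ) :
    ∑ k ∈ range (m+1), (m.choose k : ℚ) * ((k+1:ℕ):ℚ)^(k-1) * ((m-k+1:ℕ):ℚ)^(m-k-1)
      = (AbP m).eval 2 := by
  have h := congrArg (eval 1) (AbP_binom m 1)
  rw [eval_finset_sum, eval_comp] at h
  simp only [eval_smul, smul_eq_mul, eval_add, eval_X, eval_C] at h
  rw [show (1:ℚ) + 1 = 2 by norm_num] at h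
  rw [← h]
  refine Finset.sum_congr rfl fun k _ => ?_
  rw [AbP_eval_one, AbP_eval_one]
  ring

lemma abel_sum (n : ℕ) (hn : 2 ≤ n) :
    ((n:ℚ)^3) * ∑ i ∈ Icc 1 (n-1), ((n-2).choose (i-1) : ℚ) * (i:ℚ)^(i-2) * ((n-i:ℕ):ℚ)^(n-i-2)
      = 2 * (n:ℚ)^n := by
  obtain ⟨m, rfl⟩ : ∃ m, n = m + 2 := ⟨n-2, by omega⟩
  have h1 : (m + 2 - 1 : ℕ) = m + 1 := by omega
  have h2 : (m + 2 - 2 : ℕ) = m := by omega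
  rw [h1, h2]
  have h3 : ∑ i ∈ Icc 1 (m+1), (m.choose (i-1) : ℚ) * (i:ℚ)^(i-2) * ((m+2-i:ℕ):ℚ)^(m+2-i-2)
      = ∑ k ∈ range (m+1), (m.choose k : ℚ) * ((k+1:ℕ):ℚ)^(k-1) * ((m-k+1:ℕ):ℚ)^(m-k-1) := by
    rw [← Finset.Ico_add_one_right_eq_Icc, Finset.sum_Ico_eq_sum_range]
    refine Finset.sum_congr (by norm_num) fun k hk => ?_
    simp only [Finset.mem_range] at hk
    rw [show 1 + k = k + 1 by omega]
    simp only [show k + 1 - 1 = k by omega, show k + 1 - 2 = k - 1 by omega,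
      show m + 2 - (k + 1) - 2 = m - k - 1 by omega, show m + 2 - (k + 1) = m - k + 1 by omega,
      show m - k + 1 - 2 = m - k - 1 by omega]
  rw [h3, AbP_key]
  cases m with
  | zero => norm_num [AbP]
  | succ j =>
    rw [AbP_succ]
    simp only [eval_mul, eval_pow, eval_add, eval_X, eval_natCast, eval_one]
    push_cast
    have : ((j:ℚ) + 1 + 2) ^ (j + 1 + 2) = ((j:ℚ) + 1 + 2) ^ (j:ℕ) * ((j:ℚ) + 1 + 2)^3 := by
      rw [← pow_add]
    rw [this]
    ring_nf

/-- `J` satisfies the recursion of Mestre–Oeckl for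
`J(n,k) = 2^k (n+k-1)! I(n,k)`. -/
def JRec (J : ℕ → ℤ → ℚ) : Prop :=
  (∀ (n : ℕ) (k : ℤ), k < 0 ∨ n < 1 → J n k = 0) ∧
  J 1 0 = 1 ∧
  ∀ (n k : ℕ), 1 ≤ n → (n, k) ≠ (1, 0) →
    J n k = (n : ℚ) ^ 2 * J n ((k : ℤ) - 1) +
      (1 / 2) * ∑ i ∈ Finset.Icc 1 (n - 1), ∑ j ∈ Finset.range (k + 1),
        ((n + k - 2).choose (i + j - 1) : ℚ) * (i : ℚ) * ((n - i : ℕ) : ℚ) *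
          J i j * J (n - i) ((k : ℤ) - (j : ℤ))

lemma mulJ (J : ℕ → ℤ → ℚ) (m : ℕ) (hm : 1 ≤ m) (h : (m:ℚ)^3 * J m 0 = (m:ℚ)^m) :
    (m:ℚ) * J m 0 = (m:ℚ)^(m-2) := by
  have hm0 : (m:ℚ) ≠ 0 := Nat.cast_ne_zero.mpr (by omega)
  have hp : (m:ℚ)^(m-2) * (m:ℚ)^2 = (m:ℚ)^m := by
    rcases Nat.lt_or_ge m 2 with h2|h2
    · interval_cases m
      norm_num
    · rw [← pow_add]
      congr 1
      omega
  have h2 : ((m:ℚ) * J m 0) * (m:ℚ)^2 = (m:ℚ)^(m-2) * (m:ℚ)^2 := by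
    rw [hp, ← h]; ring
  exact mul_right_cancel₀ (pow_ne_zero 2 hm0) h2

theorem J_n_zero (J : ℕ → ℤ → ℚ) (hJ : JRec J) :
    ∀ n : ℕ, 1 ≤ n → (n : ℚ) ^ 3 * J n 0 = (n : ℚ) ^ n := by
  obtain ⟨hzero, hone, hrec⟩ := hJ
  intro n
  induction n using Nat.strong_induction_on with
  | _ n ih =>
    intro hn
    rcases Nat.lt_or_ge n 2 with h2 | h2
    · have hn1 : n = 1 := by omega
      subst hn1
      rw [hone]
      norm_num
    · have hne : (n, (0:ℕ)) ≠ (1, 0) := by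
        simp only [ne_eq, Prod.mk.injEq]
        omega
      have hr := hrec n 0 hn hne
      have hneg : J n (((0:ℕ) : ℤ) - 1) = 0 := hzero n _ (Or.inl (by norm_num))
      rw [hneg, mul_zero, zero_add] at hr
      simp only [zero_add, Finset.sum_range_one, Nat.cast_zero, sub_zero, add_zero] at hr
      have hterm : ∀ i ∈ Finset.Icc 1 (n-1),
          ((n - 2).choose (i - 1) : ℚ) * (i : ℚ) * ((n - i : ℕ) : ℚ) * J i 0 * J (n - i) 0
            = ((n-2).choose (i-1) : ℚ) * (i:ℚ)^(i-2) * ((n-i:ℕ):ℚ)^(n-i-2) := by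
        intro i hi
        simp only [Finset.mem_Icc] at hi
        have hi1 : 1 ≤ i := hi.1
        have hin : i < n := by omega
        have hni1 : 1 ≤ n - i := by omega
        have hnin : n - i < n := by omega
        have e1 : (i:ℚ) * J i 0 = (i:ℚ)^(i-2) := mulJ J i hi1 (ih i hin hi1)
        have e2 : ((n-i:ℕ):ℚ) * J (n-i) 0 = ((n-i:ℕ):ℚ)^(n-i-2) := mulJ J (n-i) hni1 (ih (n-i) hnin hni1)
        calc ((n - 2).choose (i - 1) : ℚ) * (i : ℚ) * ((n - i : ℕ) : ℚ) * J i 0 * J (n - i) 0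
            = ((n - 2).choose (i - 1) : ℚ) * ((i : ℚ) * J i 0) * (((n - i : ℕ) : ℚ) * J (n - i) 0) := by ring
          _ = ((n-2).choose (i-1) : ℚ) * (i:ℚ)^(i-2) * ((n-i:ℕ):ℚ)^(n-i-2) := by rw [e1, e2]
      rw [Finset.sum_congr rfl hterm] at hr
      rw [hr]
      have ha := abel_sum n h2
      linear_combination (1/2 : ℚ) * ha
end

section
/- With J defined by the recursion J(n,k)=0 for k<0 or n<1, J(1,0)=1, and J(n,k) = n² J(n,k-1) + (1/2) \sum_{i=1}^{n-1} \sum_{j=0}^{k} \binom{n+k-2}{i+j-1} i(n-i) J(i,j) J(n-i,k-j) for n ≥ 1, k ≥ 0, we have J(n,1) = n! \sum_{μ=1}^{n} n^{n-μ-1}/(n-μ)! for all n ≥ 1. -/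
open Polynomial Finset
open scoped Nat

namespace Polynomial

variable {R : Type*} [CommRing R]

theorem eq_of_derivative_eq_of_eval_zero_eq [IsAddTorsionFree R] {p q : R[X]}
    (hd : derivative p = derivative q) (h0 : p.eval 0 = q.eval 0) : p = q := by
  have hc := eq_C_of_derivative_eq_zero (p := p - q) (by rw [derivative_sub, hd, sub_self])
  rw [← coeff_zero_eq_eval_zero, ← coeff_zero_eq_eval_zero, ← sub_eq_zero, ← coeff_sub]
    at h0
  rwa [h0, C_0, sub_eq_zero] at hc

/-- The Abel polynomials `X (X + k)^(k-1)`. -/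
noncomputable def abelPoly : ℕ → R[X]
  | 0 => 1
  | k + 1 => X * (X + (k + 1 : R[X])) ^ k

@[simp]
theorem abelPoly_zero : abelPoly 0 = (1 : R[X]) := rfl

@[simp]
theorem eval_zero_abelPoly_succ (k : ℕ) : (abelPoly (k + 1) : R[X]).eval 0 = 0 := by
  simp [abelPoly]

theorem derivative_abelPoly_succ (k : ℕ) :
    derivative (abelPoly (k + 1) : R[X]) = (k + 1 : R[X]) * (abelPoly k).comp (X + 1) := by
  cases k with
  | zero => simp [abelPoly]
  | succ k =>
    simp only [abelPoly, derivative_mul, derivative_X, derivative_pow_succ, derivative_add,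
      derivative_natCast, derivative_one, mul_comp, X_comp, pow_comp, add_comp, natCast_comp,
      one_comp, Nat.cast_add, Nat.cast_one, C_add, C_1, map_natCast]
    ring

theorem eval_abelPoly {K : Type*} [Field K] (k : ℕ) (x : K) (hx : x + k ≠ 0) :
    (abelPoly k : K[X]).eval x = x * (x + k) ^ ((k : ℤ) - 1) := by
  cases k with
  | zero => simp_all
  | succ k => simp [abelPoly, zpow_natCast]

theorem eval_one_abelPoly {K : Type*} [Field K] [CharZero K] (k : ℕ) :
    (abelPoly k : K[X]).eval 1 = ((k : K) + 1) ^ ((k : ℤ) - 1) := by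
  rw [add_comm, eval_abelPoly _ _ (by rw [add_comm]; exact Nat.cast_add_one_ne_zero k), one_mul]

/-- Abel's expansion, for any sequence on which `d/dX` acts as it does on the Abel polynomials. -/
theorem eq_sum_choose_mul_abelPoly [IsAddTorsionFree R] {Q : ℕ → R[X]}
    (hQ₀ : derivative (Q 0) = 0)
    (hQ : ∀ m, derivative (Q (m + 1)) = (m + 1 : R[X]) * (Q m).comp (X + 1)) (m : ℕ) :
    Q m = ∑ p ∈ antidiagonal m, C ((m.choose p.1 : R) * (Q p.2).eval 0) * abelPoly p.1 := by
  induction m with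
  | zero => refine eq_of_derivative_eq_of_eval_zero_eq ?_ ?_ <;> simp [hQ₀]
  | succ m ih =>
    refine eq_of_derivative_eq_of_eval_zero_eq ?_ ?_
    · rw [hQ, ih, Nat.sum_antidiagonal_succ, derivative_add, derivative_sum]
      simp only [derivative_mul, derivative_C, zero_mul, zero_add, abelPoly_zero, derivative_one,
        mul_zero, derivative_abelPoly_succ, sum_comp, mul_comp, C_comp, mul_sum]
      refine sum_congr rfl fun p _ => ?_
      have hchoose : ((m + 1).choose (p.1 + 1) : R[X]) * (p.1 + 1) = (m + 1) * m.choose p.1 := by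
        exact_mod_cast congrArg (Nat.cast (R := R[X])) (Nat.add_one_mul_choose_eq m p.1).symm
      simp only [C_mul, C_eq_natCast]
      linear_combination -C ((Q p.2).eval 0) * (abelPoly p.1).comp (X + 1) * hchoose
    · simp [Nat.sum_antidiagonal_succ, eval_finsetSum]

theorem abelPoly_comp_X_add_C [IsAddTorsionFree R] (y : R) (m : ℕ) :
    (abelPoly m).comp (X + C y) =
      ∑ p ∈ antidiagonal m, C ((m.choose p.1 : R) * (abelPoly p.2).eval y) * abelPoly p.1 := by
  refine (eq_sum_choose_mul_abelPoly (Q := fun m => (abelPoly m).comp (X + C y))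
    (by simp) (fun m => ?_) m).trans (by simp [eval_comp])
  simp only [derivative_comp, derivative_add, derivative_X, derivative_C, add_zero, one_mul,
    derivative_abelPoly_succ, mul_comp, natCast_comp, add_comp, one_comp, comp_assoc, X_comp,
    C_comp]
  ring_nf

/-- `m! · ∑_{t ≤ m} X^t / t!`. -/
noncomputable def partialExpPoly : ℕ → R[X]
  | 0 => 1
  | m + 1 => X ^ (m + 1) + (m + 1 : R[X]) * partialExpPoly m

theorem derivative_partialExpPoly_succ (m : ℕ) :
    derivative (partialExpPoly (m + 1) : R[X]) = (m + 1 : R[X]) * partialExpPoly m := by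
  induction m with
  | zero => simp [partialExpPoly]
  | succ m ih =>
    rw [partialExpPoly, derivative_add, derivative_mul, ih, partialExpPoly]
    simp only [derivative_X_pow, derivative_add, derivative_natCast, derivative_one,
      C_eq_natCast]
    push_cast
    ring

theorem partialExpPoly_comp_X_add [IsAddTorsionFree R] (m : ℕ) :
    (partialExpPoly m).comp (X + (m + 1 : R[X])) = ∑ p ∈ antidiagonal m,
      C ((m.choose p.1 : R) * (partialExpPoly p.2).eval ((p.2 : R) + 1)) * abelPoly p.1 := by
  refine (eq_sum_choose_mul_abelPoly (Q := fun m => (partialExpPoly m).comp (X + (m + 1 : R[X])))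
    (by simp [partialExpPoly]) (fun m => ?_) m).trans (by simp [eval_comp])
  simp only [derivative_comp, derivative_add, derivative_X, derivative_natCast, derivative_one,
    add_zero, one_mul, derivative_partialExpPoly_succ, mul_comp, natCast_comp, add_comp, one_comp,
    comp_assoc, X_comp]
  push_cast
  ring_nf

theorem eval_partialExpPoly {K : Type*} [Field K] [CharZero K] (m : ℕ) (x : K) :
    (partialExpPoly m).eval x = ∑ t ∈ range (m + 1), (m ! : K) / t ! * x ^ t := by
  induction m with
  | zero => simp [partialExpPoly]
  | succ m ih =>
    rw [partialExpPoly, eval_add, eval_mul, ih, sum_range_succ _ (m + 1), mul_sum]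
    simp only [eval_pow, eval_X, eval_add, eval_natCast, eval_one, Nat.factorial_succ,
      Nat.cast_mul]
    rw [div_self (by simp [Nat.factorial_ne_zero, Nat.cast_add_one_ne_zero]), one_mul, add_comm]
    congr 1
    refine sum_congr rfl fun t _ => ?_
    push_cast
    ring

end Polynomial

theorem sum_choose_mul_zpow_mul_zpow (m : ℕ) :
    ∑ p ∈ antidiagonal m, (m.choose p.1 : ℚ) * ((p.1 : ℚ) + 1) ^ ((p.1 : ℤ) - 1) *
      ((p.2 : ℚ) + 1) ^ ((p.2 : ℤ) - 1) = 2 * ((m : ℚ) + 2) ^ ((m : ℤ) - 1) := by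
  have h := congrArg (eval 1) (abelPoly_comp_X_add_C (1 : ℚ) m)
  simp only [eval_comp, eval_add, eval_X, eval_C, eval_finsetSum, eval_mul, eval_one_abelPoly]
    at h
  rw [eval_abelPoly _ _ (by positivity)] at h
  norm_num at h
  rw [add_comm, h]
  exact sum_congr rfl fun p _ => by ring

theorem sum_choose_mul_zpow_mul_eval_partialExpPoly (m : ℕ) :
    ∑ p ∈ antidiagonal m, (m.choose p.1 : ℚ) * ((p.1 : ℚ) + 1) ^ ((p.1 : ℤ) - 1) *
      (partialExpPoly p.2).eval ((p.2 : ℚ) + 1) = (partialExpPoly m).eval ((m : ℚ) + 2) := by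
  have h := congrArg (eval 1) (partialExpPoly_comp_X_add (R := ℚ) m)
  simp only [eval_comp, eval_add, eval_X, eval_natCast, eval_one, eval_finsetSum, eval_mul,
    eval_C, eval_one_abelPoly] at h
  rw [show (1 : ℚ) + (m + 1) = m + 2 by ring] at h
  rw [h]
  exact sum_congr rfl fun p _ => by ring

namespace JRec

variable {J : ℕ → ℤ → ℚ}

theorem apply_add_two (hJ : JRec J) (m k : ℕ) :
    J (m + 2) k = ((m : ℚ) + 2) ^ 2 * J (m + 2) ((k : ℤ) - 1) +
      1 / 2 * ∑ p ∈ antidiagonal m, ∑ j ∈ range (k + 1),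
        ((m + k).choose (p.1 + j) : ℚ) * ((p.1 : ℚ) + 1) * ((p.2 : ℚ) + 1) *
          J (p.1 + 1) j * J (p.2 + 1) ((k : ℤ) - j) := by
  rw [hJ.2.2 (m + 2) k (by omega) (by simp)]
  push_cast
  congr 2
  refine sum_nbij' (fun i => (i - 1, m + 1 - i)) (fun p => p.1 + 1) ?_ ?_ ?_ ?_ ?_
  · intro i hi
    simp only [mem_Icc, HasAntidiagonal.mem_antidiagonal] at hi ⊢
    omega
  · intro p hp
    simp only [mem_Icc, HasAntidiagonal.mem_antidiagonal] at hp ⊢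
    omega
  · intro i hi
    simp only [mem_Icc] at hi
    omega
  · intro p hp
    simp only [HasAntidiagonal.mem_antidiagonal] at hp
    ext <;> simp only <;> omega
  · intro i hi
    simp only [mem_Icc] at hi
    obtain ⟨a, rfl⟩ := Nat.exists_eq_add_of_le' hi.1
    have hb : m + 2 - (a + 1) = m + 1 - (a + 1) + 1 := by omega
    simp only [hb, Nat.add_sub_cancel, show m + 2 + k - 2 = m + k by omega,
      show ∀ j, a + 1 + j - 1 = a + j by omega]
    push_cast
    rfl

theorem mul_apply_succ_zero (hJ : JRec J) (k : ℕ) :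
    ((k : ℚ) + 1) * J (k + 1) 0 = ((k : ℚ) + 1) ^ ((k : ℤ) - 1) := by
  induction k using Nat.strong_induction_on with
  | _ k ih =>
    obtain _ | m := k
    · simpa using hJ.2.1
    have hterm : ∀ p ∈ antidiagonal m,
        (m.choose p.1 : ℚ) * ((p.1 : ℚ) + 1) * ((p.2 : ℚ) + 1) * J (p.1 + 1) 0 * J (p.2 + 1) 0 =
          m.choose p.1 * ((p.1 : ℚ) + 1) ^ ((p.1 : ℤ) - 1) *
            ((p.2 : ℚ) + 1) ^ ((p.2 : ℤ) - 1) := by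
      intro p hp
      rw [HasAntidiagonal.mem_antidiagonal] at hp
      rw [← ih p.1 (by omega), ← ih p.2 (by omega)]
      ring
    have hrec := hJ.apply_add_two m 0
    simp only [Nat.cast_zero, zero_sub, sum_range_one, add_zero, neg_zero,
      hJ.1 (m + 2) (-1) (by omega), mul_zero, zero_add] at hrec
    rw [show m + 1 + 1 = m + 2 from rfl, hrec, sum_congr rfl hterm,
      sum_choose_mul_zpow_mul_zpow]
    push_cast
    rw [show (m : ℚ) + 1 + 1 = m + 2 by ring, show (m : ℤ) + 1 - 1 = 1 + ((m : ℤ) - 1) by ring,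
      zpow_one_add₀ (by positivity)]
    ring

theorem apply_succ_one (hJ : JRec J) (m : ℕ) :
    J (m + 1) 1 = (partialExpPoly m).eval ((m : ℚ) + 1) := by
  induction m using Nat.strong_induction_on with
  | _ m ih =>
    obtain _ | m := m
    · simpa [partialExpPoly, hJ.2.1] using hJ.2.2 1 1 le_rfl (by simp)
    have hrec := hJ.apply_add_two m 1
    simp only [sum_range_succ, range_zero, sum_empty, zero_add, sum_add_distrib, Nat.cast_zero,
      Nat.cast_one, sub_zero, sub_self, add_zero] at hrec
    have hhalf : ∑ q ∈ antidiagonal m,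
        ((m + 1).choose q.1 : ℚ) * ((q.1 : ℚ) + 1) * ((q.2 : ℚ) + 1) *
          J (q.1 + 1) 0 * J (q.2 + 1) 1 =
        ((m : ℚ) + 1) * (partialExpPoly m).eval ((m : ℚ) + 2) := by
      rw [← sum_choose_mul_zpow_mul_eval_partialExpPoly, mul_sum]
      refine sum_congr rfl fun q hq => ?_
      rw [HasAntidiagonal.mem_antidiagonal] at hq
      have hchoose :
          ((m + 1).choose q.1 : ℚ) * ((q.2 : ℚ) + 1) = ((m : ℚ) + 1) * m.choose q.1 := by
        have := Nat.choose_mul_succ_eq m q.1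
        rw [show m + 1 - q.1 = q.2 + 1 by omega] at this
        exact_mod_cast this.symm.trans (mul_comm _ _)
      rw [← hJ.mul_apply_succ_zero, ih q.2 (by omega)]
      linear_combination
        ((q.1 : ℚ) + 1) * J (q.1 + 1) 0 * (partialExpPoly q.2).eval ((q.2 : ℚ) + 1) * hchoose
    have hswap : ∑ q ∈ antidiagonal m,
        ((m + 1).choose (q.1 + 1) : ℚ) * ((q.1 : ℚ) + 1) * ((q.2 : ℚ) + 1) *
          J (q.1 + 1) 1 * J (q.2 + 1) 0 =
        ∑ q ∈ antidiagonal m,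
          ((m + 1).choose q.1 : ℚ) * ((q.1 : ℚ) + 1) * ((q.2 : ℚ) + 1) *
            J (q.1 + 1) 0 * J (q.2 + 1) 1 := by
      rw [← Nat.sum_antidiagonal_swap]
      refine sum_congr rfl fun q hq => ?_
      rw [HasAntidiagonal.mem_antidiagonal] at hq
      rw [Prod.fst_swap, Prod.snd_swap,
        Nat.choose_symm_of_eq_add (show m + 1 = (q.2 + 1) + q.1 by omega)]
      ring
    have hcayley := hJ.mul_apply_succ_zero (m + 1)
    rw [show m + 1 + 1 = m + 2 from rfl, hrec, hswap, hhalf, partialExpPoly]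
    push_cast at hcayley ⊢
    rw [show (m : ℤ) + 1 - 1 = (m : ℕ) by ring, zpow_natCast] at hcayley
    simp only [eval_add, eval_mul, eval_pow, eval_X, eval_natCast, eval_one]
    rw [show (m : ℚ) + 1 + 1 = m + 2 by ring] at hcayley ⊢
    linear_combination ((m : ℚ) + 2) * hcayley

end JRec

theorem eval_partialExpPoly_natCast_add_one (m : ℕ) :
    (partialExpPoly m).eval ((m : ℚ) + 1) = ((m + 1) ! : ℚ) * ∑ μ ∈ Icc 1 (m + 1),
      ((m + 1 : ℕ) : ℚ) ^ (((m + 1 : ℕ) : ℤ) - μ - 1) / ((m + 1 - μ) ! : ℚ) := by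
  rw [eval_partialExpPoly, mul_sum]
  refine sum_nbij' (fun t => m + 1 - t) (fun μ => m + 1 - μ) ?_ ?_ ?_ ?_ ?_
  · intro t ht
    simp only [mem_range, mem_Icc] at ht ⊢
    omega
  · intro μ hμ
    simp only [mem_range, mem_Icc] at hμ ⊢
    omega
  · intro t ht
    simp only [mem_range] at ht
    omega
  · intro μ hμ
    simp only [mem_Icc] at hμ
    omega
  · intro t ht
    simp only [mem_range] at ht
    rw [show m + 1 - (m + 1 - t) = t by omega,
      show ((m + 1 : ℕ) : ℤ) - ((m + 1 - t : ℕ) : ℤ) - 1 = t - 1 by omega,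
      Nat.factorial_succ, zpow_sub_one₀ (by positivity), zpow_natCast]
    push_cast
    field_simp

theorem J_n_one (J : ℕ → ℤ → ℚ) (hJ : JRec J) :
    ∀ n : ℕ, 1 ≤ n →
      J n 1 = (Nat.factorial n : ℚ) *
        ∑ μ ∈ Finset.Icc 1 n,
          (n : ℚ) ^ ((n : ℤ) - (μ : ℤ) - 1) / (Nat.factorial (n - μ) : ℚ) := by
  intro n hn
  obtain ⟨m, rfl⟩ := Nat.exists_eq_add_of_le' hn
  rw [hJ.apply_succ_one, eval_partialExpPoly_natCast_add_one]
end

section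
/- With J as in the standard recursion, J(3,k) = (81/24)·9^k − (75/24)·5^k + (18/24)·3^k for all k ≥ 0. -/
/-!
Only the term `n² J(n,k-1)` survives for `n = 1`, so `J(1,k) = 1`. For `n = 2, 3` the recursion
becomes a first-order linear recurrence `J(n,k) = n² J(n,k-1) + c k` with `J(n,-1) = 0`. For
`n = 2` the splitting sum is `∑ binom(k,j) = 2^k`, whence `J(2,k) = 4^k - 2^k/2`. For `n = 3`
the substitution `j ↦ k - j` shows that the splittings `1 + 2` and `2 + 1` contribute equally,
and the binomial theorem turns their contribution into `c k = (5^(k+1) - 3^(k+1))/2`.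
-/

open Finset

theorem sum_range_choose_succ_mul_pow_succ {R : Type*} [CommRing R] (x : R) (n : ℕ) :
    ∑ j ∈ range n, (n.choose (j + 1) : R) * x ^ (j + 1) = (1 + x) ^ n - 1 := by
  rw [add_comm, add_pow, sum_range_succ', eq_sub_iff_add_eq]
  simp [mul_comm]

/-- The inner sum of `JRec` at `J n k`: the contribution of the splitting `n = i + (n - i)`. -/
def splitSum (J : ℕ → ℤ → ℚ) (n k i : ℕ) : ℚ :=
  ∑ j ∈ range (k + 1), ((n + k - 2).choose (i + j - 1) : ℚ) * (i : ℚ) * ((n - i : ℕ) : ℚ) *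
    J i j * J (n - i) ((k : ℤ) - (j : ℤ))

theorem splitSum_sub_self (J : ℕ → ℤ → ℚ) {n i : ℕ} (k : ℕ) (hi : 1 ≤ i) (hin : i < n) :
    splitSum J n k (n - i) = splitSum J n k i := by
  unfold splitSum
  rw [← sum_range_reflect, Nat.sub_sub_self hin.le]
  refine sum_congr rfl fun j hj => ?_
  have hjk : j ≤ k := mem_range_succ_iff.mp hj
  rw [Nat.add_sub_cancel, Nat.choose_symm_of_eq_add (a := n - i + (k - j) - 1) (b := i + j - 1)
    (by omega)]
  push_cast [hjk]
  ring_nf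

theorem eq_of_linear_rec {f : ℤ → ℚ} {g : ℕ → ℚ} {a : ℚ} {c : ℕ → ℚ} (hf : f (-1) = 0)
    (hf_rec : ∀ k : ℕ, f k = a * f (k - 1) + c k) (hg_zero : g 0 = c 0)
    (hg_succ : ∀ k : ℕ, g (k + 1) = a * g k + c (k + 1)) (k : ℕ) : f k = g k := by
  induction k with
  | zero => simpa [hf, hg_zero] using hf_rec 0
  | succ k ih => rw [hf_rec, hg_succ, Nat.cast_succ, add_sub_cancel_right, ih]

namespace JRec

variable {J : ℕ → ℤ → ℚ}

theorem apply_of_neg (hJ : JRec J) (n : ℕ) {k : ℤ} (hk : k < 0) : J n k = 0 :=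
  hJ.1 n k (Or.inl hk)

theorem apply_eq_splitSum (hJ : JRec J) {n : ℕ} (k : ℕ) (hn : 1 ≤ n) (hnk : (n, k) ≠ (1, 0)) :
    J n k = n ^ 2 * J n (k - 1) + 1 / 2 * ∑ i ∈ Icc 1 (n - 1), splitSum J n k i :=
  hJ.2.2 n k hn hnk

theorem apply_one (hJ : JRec J) (k : ℕ) : J 1 k = 1 := by
  induction k with
  | zero => exact hJ.2.1
  | succ k ih => simpa [ih] using hJ.apply_eq_splitSum (k + 1) le_rfl (by simp)

theorem apply_one_sub (hJ : JRec J) {j k : ℕ} (hjk : j ≤ k) : J 1 ((k : ℤ) - j) = 1 := by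
  rw [← Nat.cast_sub hjk]
  exact hJ.apply_one _

theorem apply_two_rec (hJ : JRec J) (k : ℕ) : J 2 k = 4 * J 2 (k - 1) + 2 ^ k / 2 := by
  have hsplit : splitSum J 2 k 1 = 2 ^ k := by
    unfold splitSum
    rw [show (2 : ℚ) ^ k = ((2 ^ k : ℕ) : ℚ) by push_cast; rfl, ← Nat.sum_range_choose k,
      Nat.cast_sum]
    refine sum_congr rfl fun j hj => ?_
    have hjk : j ≤ k := mem_range_succ_iff.mp hj
    simp [hJ.apply_one, hJ.apply_one_sub hjk]
  rw [hJ.apply_eq_splitSum k (by norm_num) (by simp), show Icc 1 (2 - 1) = {1} from rfl,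
    sum_singleton, hsplit]
  ring

theorem apply_two (hJ : JRec J) (k : ℕ) : J 2 k = 4 ^ k - 2 ^ k / 2 :=
  eq_of_linear_rec (g := fun k => 4 ^ k - 2 ^ k / 2) (hJ.apply_of_neg 2 (by norm_num))
    hJ.apply_two_rec (by norm_num) (fun k => by ring) k

theorem splitSum_three_two (hJ : JRec J) (k : ℕ) :
    splitSum J 3 k 2 = (5 ^ (k + 1) - 3 ^ (k + 1)) / 2 := by
  have hterm : ∀ j ∈ range (k + 1),
      ((3 + k - 2).choose (2 + j - 1) : ℚ) * (2 : ℕ) * ((3 - 2 : ℕ) : ℚ) * J 2 j *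
        J (3 - 2) ((k : ℤ) - j) =
      ((k + 1).choose (j + 1) * 4 ^ (j + 1) - (k + 1).choose (j + 1) * 2 ^ (j + 1)) / 2 := by
    intro j hj
    have hjk : j ≤ k := mem_range_succ_iff.mp hj
    rw [show 3 + k - 2 = k + 1 by omega, show 2 + j - 1 = j + 1 by omega, hJ.apply_two,
      show 3 - 2 = 1 from rfl, hJ.apply_one_sub hjk]
    push_cast
    ring
  rw [splitSum, sum_congr rfl hterm, ← sum_div, sum_sub_distrib,
    sum_range_choose_succ_mul_pow_succ, sum_range_choose_succ_mul_pow_succ]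
  norm_num

theorem apply_three_rec (hJ : JRec J) (k : ℕ) :
    J 3 k = 9 * J 3 (k - 1) + (5 ^ (k + 1) - 3 ^ (k + 1)) / 2 := by
  have hsplit : splitSum J 3 k 1 = splitSum J 3 k 2 :=
    splitSum_sub_self J (n := 3) (i := 2) k (by norm_num) (by norm_num)
  rw [hJ.apply_eq_splitSum k (by norm_num) (by simp), show Icc 1 (3 - 1) = {1, 2} from rfl,
    sum_pair (by norm_num), hsplit, hJ.splitSum_three_two]
  ring

end JRec

theorem J_three_k (J : ℕ → ℤ → ℚ) (hJ : JRec J) :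
    ∀ k : ℕ, J 3 k = (81 / 24) * 9 ^ k - (75 / 24) * 5 ^ k + (18 / 24) * 3 ^ k :=
  eq_of_linear_rec (hJ.apply_of_neg 3 (by norm_num)) hJ.apply_three_rec (by norm_num)
    (fun k => by ring)
end

section
/- Define P_n(z) over ℚ by P_1(z) = 1 and 2z P_n'(z) = n(n-1) P_n(z) + \sum_{i=1}^{n-1} i(n-i)\binom{n}{i} P_i(z) P_{n-i}(z) for n ≥ 2, with P_n(1) = 0 for n ≥ 2. Then each P_n is a polynomial, and \sum_{n≥1} P_n(z) y^n/n! = log(\sum_{n≥0} y^n z^{n(n-1)/2}/n!) as formal power series in y over ℚ[z, z^{-1}] (equivalently, as an identity of exponential generating functions). -/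
open Polynomial

/-- The differential recursion defining the polynomials `P_n`. -/
def PRec (P : ℕ → Polynomial ℚ) : Prop :=
  P 1 = 1 ∧
  (∀ n : ℕ, 2 ≤ n →
    2 * (Polynomial.X * Polynomial.derivative (P n)) =
      ((n * (n - 1) : ℕ) : ℚ) • P n +
        ∑ i ∈ Finset.Icc 1 (n - 1),
          ((i * (n - i) * n.choose i : ℕ) : ℚ) • (P i * P (n - i))) ∧
  (∀ n : ℕ, 2 ≤ n → (P n).eval 1 = 0)

/-- The formal logarithm of a power series with constant coefficient `1`
(coefficients over `Polynomial ℚ`), given coefficientwise by the usual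
log series `∑_{m ≥ 1} (-1)^(m+1) (G-1)^m / m`. -/
noncomputable def flog (G : PowerSeries (Polynomial ℚ)) : PowerSeries (Polynomial ℚ) :=
  PowerSeries.mk fun n =>
    ∑ m ∈ Finset.Icc 1 n, ((-1 : ℚ) ^ (m + 1) / m) • PowerSeries.coeff n ((G - 1) ^ m)

/-!
Write `G = ∑ z^(n(n-1)/2) yⁿ/n!` and `L = flog G`. For every derivation `D` of `ℚ[z]⟦y⟧` that
preserves the `y`-adic filtration, `D L * G = D G`: differentiating the truncated log series
telescopes into a geometric sum. Applied to `∂/∂z` and to the Euler operator `θ = y ∂/∂y`, the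
identity `2z ∂G/∂z + θG = θ²G` becomes `2z ∂L/∂z + θL = θ²L + (θL)²`, whose `yⁿ`-coefficients are
the recursion for `n! [yⁿ] L`. At `z = 1` the series `G` becomes `exp y`, so `θL = y` there, which
gives the boundary condition. Finally the recursion with its boundary condition determines `P_n`:
the difference of two solutions satisfies `z d' = (n choose 2) d`, so it is a multiple of
`z^(n choose 2)` vanishing at `1`.
-/

open scoped Nat PowerSeries

namespace PowerSeries

noncomputable def eulerDerivation (R A : Type*) [CommRing R] [CommRing A] [Algebra R A] :
    Derivation R A⟦X⟧ A⟦X⟧ :=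
  Derivation.mk'
    { toFun := fun f => mk fun n => n * coeff n f
      map_add' := fun f g => by ext; simp [mul_add]
      map_smul' := fun r f => by ext; simp }
    fun f g => by
      ext n
      simp only [LinearMap.coe_mk, AddHom.coe_mk, coeff_mk, coeff_mul, Finset.mul_sum,
        smul_eq_mul, map_add]
      rw [← Finset.Nat.sum_antidiagonal_swap (f := fun p => coeff p.1 g * _),
        ← Finset.sum_add_distrib]
      refine Finset.sum_congr rfl fun p hp => ?_
      rw [Finset.HasAntidiagonal.mem_antidiagonal] at hp
      simp only [Prod.fst_swap, Prod.snd_swap, ← hp, Nat.cast_add]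
      ring

variable {R A : Type*} [CommRing R] [CommRing A] [Algebra R A]

@[simp]
lemma coeff_eulerDerivation (f : A⟦X⟧) (n : ℕ) :
    coeff n (eulerDerivation R A f) = n * coeff n f := by
  simp [eulerDerivation]

lemma eulerDerivation_eq_X_mul_derivative (f : A⟦X⟧) :
    eulerDerivation R A f = X * d⁄dX A f := by
  ext n
  rcases n with _ | n
  · simp
  · simp [coeff_succ_X_mul, coeff_derivative, mul_comm]

lemma map_eulerDerivation {B : Type*} [CommRing B] [Algebra R B] (g : A →+* B) (f : A⟦X⟧) :
    map g (eulerDerivation R A f) = eulerDerivation R B (map g f) := by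
  ext n
  simp

lemma eulerDerivation_exp [Algebra ℚ A] : eulerDerivation R A (exp A) = X * exp A := by
  rw [eulerDerivation_eq_X_mul_derivative, derivative_exp]

noncomputable def _root_.Derivation.powerSeriesMapCoeffs (d : Derivation R A A) :
    Derivation R A⟦X⟧ A⟦X⟧ :=
  Derivation.mk'
    { toFun := fun f => mk fun n => d (coeff n f)
      map_add' := fun f g => by ext; simp
      map_smul' := fun r f => by ext; simp }
    fun f g => by
      ext n
      simp only [LinearMap.coe_mk, AddHom.coe_mk, coeff_mk, coeff_mul, map_sum,
        Derivation.leibniz, smul_eq_mul, map_add, Finset.sum_add_distrib]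
      congr 1
      rw [← Finset.Nat.sum_antidiagonal_swap]
      rfl

@[simp]
lemma coeff_powerSeriesMapCoeffs (d : Derivation R A A) (f : A⟦X⟧) (n : ℕ) :
    coeff n (d.powerSeriesMapCoeffs f) = d (coeff n f) := by
  simp [Derivation.powerSeriesMapCoeffs]

lemma X_pow_dvd_eulerDerivation {n : ℕ} {f : A⟦X⟧} (h : X ^ n ∣ f) :
    X ^ n ∣ eulerDerivation R A f := by
  rw [X_pow_dvd_iff] at h ⊢
  intro k hk
  simp [h k hk]

lemma X_pow_dvd_powerSeriesMapCoeffs (d : Derivation R A A) {n : ℕ} {f : A⟦X⟧}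
    (h : X ^ n ∣ f) : X ^ n ∣ d.powerSeriesMapCoeffs f := by
  rw [X_pow_dvd_iff] at h ⊢
  intro k hk
  simp [h k hk]

lemma coeff_pow_eq_zero_of_lt {f : A⟦X⟧} (hf : constantCoeff f = 0) {k m : ℕ} (hkm : k < m) :
    coeff k (f ^ m) = 0 :=
  X_pow_dvd_iff.mp (pow_dvd_pow_of_dvd (X_dvd_iff.mpr hf) m) k hkm

end PowerSeries

namespace Polynomial

variable {R : Type*} [Semiring R]

lemma coeff_X_mul_derivative (p : R[X]) (k : ℕ) :
    (X * derivative p).coeff k = k * p.coeff k := by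
  rcases k with _ | k
  · simp
  · simpa [coeff_derivative] using (Nat.cast_commute (k + 1) _).symm.eq

lemma X_mul_derivative_X_pow (e : ℕ) : X * derivative (X ^ e : R[X]) = (e : R[X]) * X ^ e := by
  ext k
  rw [coeff_X_mul_derivative, coeff_natCast_mul, coeff_X_pow]
  split_ifs with h <;> simp [h]

lemma eq_C_mul_X_pow_of_X_mul_derivative_eq [IsDomain R] [CharZero R] {p : R[X]} {k : ℕ}
    (h : X * derivative p = (k : R[X]) * p) : p = C (p.coeff k) * X ^ k := by
  ext j
  rw [coeff_C_mul_X_pow]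
  split_ifs with hjk
  · rw [hjk]
  · have hj : (j : R) * p.coeff j = k * p.coeff j := by
      rw [← coeff_X_mul_derivative, h, coeff_natCast_mul]
    by_contra hp
    exact hjk (by exact_mod_cast mul_right_cancel₀ hp hj)

end Polynomial

noncomputable def logPartialSum (H : ℚ[X]⟦X⟧) (n : ℕ) : ℚ[X]⟦X⟧ :=
  ∑ m ∈ Finset.Icc 1 n, ((-1 : ℚ) ^ (m + 1) / m) • H ^ m

lemma X_pow_succ_dvd_flog_sub_logPartialSum {G : ℚ[X]⟦X⟧}
    (hG : PowerSeries.constantCoeff G = 1) (n : ℕ) :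
    PowerSeries.X ^ (n + 1) ∣ flog G - logPartialSum (G - 1) n := by
  have hG1 : PowerSeries.constantCoeff (G - 1) = 0 := by simp [hG]
  refine PowerSeries.X_pow_dvd_iff.mpr fun k hk => ?_
  rw [map_sub, sub_eq_zero, flog, logPartialSum, PowerSeries.coeff_mk, map_sum]
  simp only [PowerSeries.coeff_smul]
  refine Finset.sum_subset (Finset.Icc_subset_Icc_right (by omega)) fun m hm hmk => ?_
  rw [PowerSeries.coeff_pow_eq_zero_of_lt hG1 (by simp_all), smul_zero]

lemma derivation_logPartialSum (D : Derivation ℚ ℚ[X]⟦X⟧ ℚ[X]⟦X⟧) (H : ℚ[X]⟦X⟧)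
    (n : ℕ) :
    D (logPartialSum H n) = (∑ i ∈ Finset.range n, (-H) ^ i) * D H := by
  induction n with
  | zero => simp [logPartialSum]
  | succ n ih =>
    rw [logPartialSum, Finset.sum_Icc_succ_top (by omega), map_add, ← logPartialSum, ih,
      Finset.sum_range_succ, add_mul, Derivation.map_smul, Derivation.leibniz_pow,
      Nat.add_sub_cancel, smul_eq_mul, ← Nat.cast_smul_eq_nsmul ℚ, smul_smul]
    have hc : (-1 : ℚ) ^ (n + 1 + 1) / (n + 1 : ℕ) * (n + 1 : ℕ) = (-1) ^ n := by
      field_simp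
      ring
    rw [hc, Algebra.smul_def, map_pow, map_neg, map_one, neg_pow H]
    ring

theorem derivation_flog_mul {D : Derivation ℚ ℚ[X]⟦X⟧ ℚ[X]⟦X⟧}
    (hD : ∀ n f, PowerSeries.X ^ n ∣ f → PowerSeries.X ^ n ∣ D f) {G : ℚ[X]⟦X⟧}
    (hG : PowerSeries.constantCoeff G = 1) :
    D (flog G) * G = D G := by
  set H := G - 1 with hH
  have hXH : PowerSeries.X ∣ H := PowerSeries.X_dvd_iff.mpr (by simp [H, hG])
  have hDH : D H = D G := by simp [H, Derivation.map_one_eq_zero]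
  refine PowerSeries.ext fun n => ?_
  have hdvd : PowerSeries.X ^ (n + 1) ∣ D (flog G) * G - D G := by
    have hsplit : D (flog G) * G - D G = D (flog G - logPartialSum H n) * G - (-H) ^ n * D H := by
      have hgeom : (∑ i ∈ Finset.range n, (-H) ^ i) * G = 1 - (-H) ^ n := by
        rw [← geom_sum_mul_neg, hH]
        ring
      rw [map_sub, sub_mul, derivation_logPartialSum, mul_right_comm, hgeom, hDH]
      ring
    rw [hsplit, pow_succ]
    exact dvd_sub (dvd_mul_of_dvd_left (hD _ _ (X_pow_succ_dvd_flog_sub_logPartialSum hG n)) _)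
      (mul_dvd_mul (pow_dvd_pow_of_dvd (dvd_neg.mpr hXH) n)
        (by simpa using hD 1 H (by simpa using hXH)))
  rw [← sub_eq_zero, ← map_sub]
  exact PowerSeries.X_pow_dvd_iff.mp hdvd n n.lt_succ_self

open PowerSeries in
noncomputable def graphSeries : ℚ[X]⟦X⟧ :=
  mk fun n => (Nat.factorial n : ℚ)⁻¹ • (Polynomial.X ^ (n * (n - 1) / 2))

-- In `ℚ[X]⟦X⟧` the outer variable is `y` and the polynomial one is `z`.
local notation "Dz" => (Derivation.powerSeriesMapCoeffs (Polynomial.derivative' (R := ℚ)))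
local notation "θ" => (PowerSeries.eulerDerivation ℚ ℚ[X])
local notation "𝓛" => flog graphSeries

lemma constantCoeff_graphSeries : PowerSeries.constantCoeff graphSeries = 1 := by
  simp [graphSeries, ← PowerSeries.coeff_zero_eq_constantCoeff_apply]

lemma graphSeries_pde :
    PowerSeries.C (2 * X) * Dz graphSeries + θ graphSeries = θ (θ graphSeries) := by
  refine PowerSeries.ext fun n => ?_
  have hn : 2 * ((n * (n - 1) / 2 : ℕ) : ℚ[X]) + n = n * n := by
    norm_cast
    rw [mul_comm 2, Nat.div_two_mul_two_of_even (Nat.even_mul_pred_self n), Nat.mul_sub_one,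
      Nat.sub_add_cancel (Nat.le_mul_self n)]
  simp only [map_add, PowerSeries.coeff_C_mul, PowerSeries.coeff_powerSeriesMapCoeffs,
    PowerSeries.coeff_eulerDerivation, graphSeries, PowerSeries.coeff_mk,
    Polynomial.derivative'_apply, Polynomial.derivative_smul, mul_smul_comm, mul_assoc,
    Polynomial.X_mul_derivative_X_pow, ← smul_add]
  congr 1
  linear_combination X ^ (n * (n - 1) / 2) * hn

lemma graphSeries_ne_zero : graphSeries ≠ 0 := fun h => by
  simpa [h] using constantCoeff_graphSeries

lemma zDerivative_flog_graphSeries_mul : Dz 𝓛 * graphSeries = Dz graphSeries :=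
  derivation_flog_mul (fun _ _ => PowerSeries.X_pow_dvd_powerSeriesMapCoeffs _)
    constantCoeff_graphSeries

lemma eulerDerivation_flog_graphSeries_mul : θ 𝓛 * graphSeries = θ graphSeries :=
  derivation_flog_mul (fun _ _ => PowerSeries.X_pow_dvd_eulerDerivation) constantCoeff_graphSeries

lemma flog_graphSeries_pde :
    PowerSeries.C (2 * X) * Dz 𝓛 + θ 𝓛 = θ (θ 𝓛) + θ 𝓛 * θ 𝓛 := by
  refine mul_right_cancel₀ graphSeries_ne_zero ?_
  calc (PowerSeries.C (2 * X) * Dz 𝓛 + θ 𝓛) * graphSeries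
      = PowerSeries.C (2 * X) * Dz graphSeries + θ graphSeries := by
        rw [← zDerivative_flog_graphSeries_mul, ← eulerDerivation_flog_graphSeries_mul]
        ring
    _ = θ (θ 𝓛 * graphSeries) := by rw [graphSeries_pde, eulerDerivation_flog_graphSeries_mul]
    _ = (θ (θ 𝓛) + θ 𝓛 * θ 𝓛) * graphSeries := by
        rw [Derivation.leibniz, ← eulerDerivation_flog_graphSeries_mul, smul_eq_mul, smul_eq_mul]
        ring

lemma factorial_smul_sum_antidiagonal {B : Type*} [CommRing B] [Algebra ℚ B] (l : ℕ → B)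
    (n : ℕ) :
    (n ! : ℚ) • ∑ p ∈ Finset.HasAntidiagonal.antidiagonal n, (p.1 * l p.1) * (p.2 * l p.2) =
      ∑ i ∈ Finset.Icc 1 (n - 1), ((i * (n - i) * n.choose i : ℕ) : ℚ) •
        ((i ! : ℚ) • l i * ((n - i)! : ℚ) • l (n - i)) := by
  rw [Finset.Nat.sum_antidiagonal_eq_sum_range_succ_mk, Finset.smul_sum]
  have hterm : ∀ i ∈ Finset.range (n + 1),
      (n ! : ℚ) • ((i * l i) * ((n - i : ℕ) * l (n - i))) =
        ((i * (n - i) * n.choose i : ℕ) : ℚ) •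
          ((i ! : ℚ) • l i * ((n - i)! : ℚ) • l (n - i)) := by
    intro i hi
    have hfact := Nat.choose_mul_factorial_mul_factorial (Finset.mem_range_succ_iff.mp hi)
    simp only [← nsmul_eq_mul, ← Nat.cast_smul_eq_nsmul ℚ, smul_mul_smul_comm, smul_smul]
    congr 1
    rw [← hfact]
    push_cast
    ring
  rw [Finset.sum_congr rfl hterm]
  refine (Finset.sum_subset (fun i hi => ?_) fun i hi hi' => ?_).symm
  · simp only [Finset.mem_Icc, Finset.mem_range] at hi ⊢
    omega
  · simp only [Finset.mem_Icc, Finset.mem_range] at hi hi'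
    obtain rfl | rfl : i = 0 ∨ i = n := by omega
    all_goals simp

lemma factorial_smul_coeff_flog_graphSeries_rec (n : ℕ) :
    2 * (X * derivative ((n ! : ℚ) • PowerSeries.coeff n 𝓛)) =
      ((n * (n - 1) : ℕ) : ℚ) • ((n ! : ℚ) • PowerSeries.coeff n 𝓛) +
        ∑ i ∈ Finset.Icc 1 (n - 1), ((i * (n - i) * n.choose i : ℕ) : ℚ) •
          ((i ! : ℚ) • PowerSeries.coeff i 𝓛 *
            ((n - i)! : ℚ) • PowerSeries.coeff (n - i) 𝓛) := by
  have h := congrArg (PowerSeries.coeff n) flog_graphSeries_pde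
  rw [map_add, map_add, PowerSeries.coeff_C_mul, PowerSeries.coeff_mul] at h
  simp only [PowerSeries.coeff_powerSeriesMapCoeffs, PowerSeries.coeff_eulerDerivation,
    Polynomial.derivative'_apply] at h
  rw [← factorial_smul_sum_antidiagonal, derivative_smul, mul_smul_comm, mul_smul_comm,
    ← mul_assoc, eq_sub_of_add_eq h]
  rcases n with _ | n
  · simp
  · simp only [← nsmul_eq_mul, ← Nat.cast_smul_eq_nsmul ℚ, Nat.add_sub_cancel]
    push_cast
    module

lemma map_eval_one_graphSeries :
    PowerSeries.map (Polynomial.evalRingHom 1) graphSeries = PowerSeries.exp ℚ := by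
  ext n
  simp [graphSeries]

lemma eulerDerivation_map_eval_one_flog_graphSeries :
    PowerSeries.eulerDerivation ℚ ℚ (PowerSeries.map (Polynomial.evalRingHom 1) 𝓛) =
      PowerSeries.X := by
  have h := congrArg (PowerSeries.map (Polynomial.evalRingHom 1))
    eulerDerivation_flog_graphSeries_mul
  rw [map_mul, PowerSeries.map_eulerDerivation, PowerSeries.map_eulerDerivation,
    map_eval_one_graphSeries, PowerSeries.eulerDerivation_exp] at h
  exact (PowerSeries.isUnit_exp ℚ).mul_left_injective h

lemma eval_one_coeff_flog_graphSeries {n : ℕ} (hn : 2 ≤ n) :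
    (PowerSeries.coeff n 𝓛).eval 1 = 0 := by
  have h := congrArg (PowerSeries.coeff n) eulerDerivation_map_eval_one_flog_graphSeries
  simp [PowerSeries.coeff_X, show n ≠ 1 by omega] at h
  exact h.resolve_left (by omega)

lemma coeff_one_flog_graphSeries : PowerSeries.coeff 1 𝓛 = 1 := by
  simp [flog, graphSeries]

theorem pRec_factorial_smul_coeff_flog_graphSeries :
    PRec fun n => (n ! : ℚ) • PowerSeries.coeff n 𝓛 :=
  ⟨by simp [coeff_one_flog_graphSeries], fun n _ => factorial_smul_coeff_flog_graphSeries_rec n,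
    fun n hn => by simp [eval_one_coeff_flog_graphSeries hn]⟩

theorem PRec.eq_of_pos {P Q : ℕ → ℚ[X]} (hP : PRec P) (hQ : PRec Q) {n : ℕ} (hn : 0 < n) :
    P n = Q n := by
  induction n using Nat.strong_induction_on with
  | _ n ih =>
  obtain rfl | hn2 : n = 1 ∨ 2 ≤ n := by omega
  · rw [hP.1, hQ.1]
  have hsum :
      ∑ i ∈ Finset.Icc 1 (n - 1), ((i * (n - i) * n.choose i : ℕ) : ℚ) • (P i * P (n - i)) =
        ∑ i ∈ Finset.Icc 1 (n - 1), ((i * (n - i) * n.choose i : ℕ) : ℚ) • (Q i * Q (n - i)) :=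
    Finset.sum_congr rfl fun i hi => by
      rw [Finset.mem_Icc] at hi
      rw [ih i (by omega) (by omega), ih (n - i) (by omega) (by omega)]
  have hc : ((n * (n - 1) : ℕ) : ℚ) = 2 * (n.choose 2 : ℕ) := by
    rw [Nat.cast_choose_two, Nat.cast_mul, Nat.cast_pred hn]
    ring
  have hd : X * derivative (P n - Q n) = ((n.choose 2 : ℕ) : ℚ[X]) * (P n - Q n) := by
    refine mul_left_cancel₀ (two_ne_zero (α := ℚ[X])) ?_
    rw [derivative_sub, mul_sub, mul_sub, hP.2.1 n hn2, hQ.2.1 n hn2, hsum, hc, smul_eq_C_mul,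
      smul_eq_C_mul, C_mul, map_natCast, map_ofNat C 2]
    ring
  have hhom := eq_C_mul_X_pow_of_X_mul_derivative_eq hd
  have hcoeff : (P n - Q n).coeff (n.choose 2) = 0 := by
    simpa [hP.2.2 n hn2, hQ.2.2 n hn2, eq_comm] using congrArg (eval 1) hhom
  rw [← sub_eq_zero, hhom, hcoeff, map_zero, zero_mul]

theorem P_egf_log (P : ℕ → Polynomial ℚ) (hP : PRec P) :
    PowerSeries.mk (fun n => if n = 0 then 0 else (Nat.factorial n : ℚ)⁻¹ • P n) =
      flog (PowerSeries.mk fun n =>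
        (Nat.factorial n : ℚ)⁻¹ • (Polynomial.X ^ (n * (n - 1) / 2))) := by
  refine PowerSeries.ext fun n => ?_
  rw [PowerSeries.coeff_mk]
  split_ifs with hn
  · simp [hn, flog]
  · rw [hP.eq_of_pos pRec_factorial_smul_coeff_flog_graphSeries (Nat.pos_of_ne_zero hn), smul_smul,
      inv_mul_cancel₀ (by positivity), one_smul]
    rfl
end
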